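/- Computing a minimal-weight persistent d-cycle for a finite interval of the d-th persistence diagram of an arbitrary d-weighted simplicial complex is NP-hard for every d ≥ 2, by reduction from the corresponding problem in dimension d−1: given an instance (K, F, [β,δ)) of PCYC-FIN_{d−1} with K of top dimension d, the suspension instance (SK, SF, [3β+2, 3δ+2)) with suspended d-simplices weighted at half their base weight and non-suspended d-simplices weighted above the total weight of all (d−1)-simplices, has the property that minimal persistent d-cycles of [3β+2, 3δ+2) consist only of suspended simplices and correspond weight-preservingly, via S^{-1}, to minimal persistent (d−1)-cycles of [β,δ). -/
import Mathlib


open Finset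

variable {V : Type*} [DecidableEq V]

/-- The codimension-one faces of a simplex. -/
def facetsOf (σ : Finset V) : Finset (Finset V) :=
  σ.powerset.filter (fun τ => τ.card + 1 = σ.card)

/-- The mod-2 (ℤ₂) boundary of a chain of simplices. -/
def bdry (C : Finset (Finset V)) : Finset (Finset V) :=
  (C.biUnion facetsOf).filter (fun τ => Odd ((C.filter (fun s => τ ∈ facetsOf s)).card))

/-- The partial complex K_i of the filtration given by the simplex enumeration f. -/
def cplxAt (f : ℕ → Finset V) (i : ℕ) : Finset (Finset V) :=
  (Finset.Icc 1 i).image f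

/-- ζ is a persistent q-cycle of the finite interval [β,δ). -/
def IsPersCyc (f : ℕ → Finset V) (q β δ : ℕ) (ζ : Finset (Finset V)) : Prop :=
  f β ∈ ζ ∧ (∀ τ ∈ ζ, τ ∈ cplxAt f β ∧ τ.card = q + 1) ∧ bdry ζ = ∅ ∧
  (∃ A : Finset (Finset V), (∀ τ ∈ A, τ ∈ cplxAt f δ ∧ τ.card = q + 2) ∧ f δ ∈ A ∧
    ζ = bdry A) ∧
  ¬ ∃ B : Finset (Finset V), (∀ τ ∈ B, τ ∈ cplxAt f (δ - 1) ∧ τ.card = q + 2) ∧ ζ = bdry B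

/-- The suspension filtration SF: ω₁ and ω₂ come first, and for each simplex σ_i of F the
simplices σ_i, σ_i∪{ω₁}, σ_i∪{ω₂} occupy positions 3i, 3i+1, 3i+2. -/
def gsusp (f : ℕ → Finset V) (ω₁ ω₂ : V) : ℕ → Finset V := fun i =>
  if i = 1 then {ω₁}
  else if i = 2 then {ω₂}
  else if i % 3 = 0 then f (i / 3)
  else if i % 3 = 1 then insert ω₁ (f (i / 3))
  else insert ω₂ (f (i / 3))

/-- Weights on SK: a suspended simplex σ∪{ω_i} weighs half the weight of σ; a non-suspended
d-simplex weighs the sum of the weights of all (d−1)-simplices of K plus 1. -/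
noncomputable def wHat (f : ℕ → Finset V) (w : Finset V → ℝ) (ω₁ ω₂ : V) (n d : ℕ) :
    Finset V → ℝ := fun τ =>
  if ω₁ ∈ τ then w (τ.erase ω₁) / 2
  else if ω₂ ∈ τ then w (τ.erase ω₂) / 2
  else (∑ σ ∈ (cplxAt f n).filter (fun σ => σ.card = d), w σ) + 1

open scoped symmDiff

set_option linter.unusedSectionVars false

lemma mem_facetsOf {τ σ : Finset V} : τ ∈ facetsOf σ ↔ τ ⊆ σ ∧ τ.card + 1 = σ.card := by
  simp [facetsOf]

lemma mem_bdry {C : Finset (Finset V)} {τ : Finset V} :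
    τ ∈ bdry C ↔ Odd ((C.filter (fun s => τ ∈ facetsOf s)).card) := by
  simp only [bdry, mem_filter, mem_biUnion, and_iff_right_iff_imp]
  intro h
  obtain ⟨s, hs⟩ := Finset.card_pos.mp h.pos
  exact ⟨s, (mem_filter.mp hs).1, (mem_filter.mp hs).2⟩

lemma exists_of_mem_bdry {C : Finset (Finset V)} {τ : Finset V} (h : τ ∈ bdry C) :
    ∃ s ∈ C, τ ⊆ s := by
  rw [mem_bdry] at h
  obtain ⟨s, hs⟩ := Finset.card_pos.mp h.pos
  exact ⟨s, (mem_filter.mp hs).1, (mem_facetsOf.mp (mem_filter.mp hs).2).1⟩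

lemma bdry_union {C C' : Finset (Finset V)} (h : Disjoint C C') :
    bdry (C ∪ C') = (bdry C) ∆ (bdry C') := by
  ext τ
  rw [Finset.mem_symmDiff]
  simp only [mem_bdry, filter_union]
  rw [Finset.card_union_of_disjoint (h.mono (filter_subset _ _) (filter_subset _ _))]
  simp only [Nat.odd_add, Nat.odd_iff, Nat.even_iff]
  omega

lemma insert_inj_free {ω : V} {ρ ρ' : Finset V} (h : ω ∉ ρ) (h' : ω ∉ ρ') :
    insert ω ρ = insert ω ρ' ↔ ρ = ρ' := by
  constructor
  · intro he
    have := congrArg (fun s => Finset.erase s ω) he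
    simpa [Finset.erase_insert h, Finset.erase_insert h'] using this
  · rintro rfl; rfl

lemma facetsOf_insert {ω : V} {σ : Finset V} (hω : ω ∉ σ) :
    facetsOf (insert ω σ) = insert σ ((facetsOf σ).image (insert ω)) := by
  ext τ
  simp only [mem_facetsOf, Finset.mem_insert, Finset.mem_image, Finset.card_insert_of_notMem hω]
  constructor
  · rintro ⟨hsub, hcard⟩
    by_cases hωτ : ω ∈ τ
    · right
      refine ⟨τ.erase ω, ⟨fun x hx => ?_, ?_⟩, by rw [Finset.insert_erase hωτ]⟩
      · have hxτ : x ∈ τ := Finset.mem_of_mem_erase hx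
        have := hsub hxτ
        rcases Finset.mem_insert.mp this with rfl | h
        · exact absurd rfl (Finset.ne_of_mem_erase hx)
        · exact h
      · have : (τ.erase ω).card + 1 = τ.card := Finset.card_erase_add_one hωτ
        omega
    · left
      have hsub' : τ ⊆ σ := fun x hx => by
        rcases Finset.mem_insert.mp (hsub hx) with rfl | h
        · exact absurd hx hωτ
        · exact h
      exact Finset.eq_of_subset_of_card_le hsub' (by omega)
  · rintro (rfl | ⟨ρ, ⟨hsub, hcard⟩, rfl⟩)
    · exact ⟨Finset.subset_insert _ _, rfl⟩
    · have hωρ : ω ∉ ρ := fun h => hω (hsub h)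
      exact ⟨Finset.insert_subset_insert _ hsub, by
        rw [Finset.card_insert_of_notMem hωρ]; omega⟩

lemma mem_facetsOf_insert_base {ω : V} {σ τ : Finset V} (hω : ω ∉ σ) (hωτ : ω ∉ τ) :
    τ ∈ facetsOf (insert ω σ) ↔ τ = σ := by
  rw [facetsOf_insert hω]
  simp only [Finset.mem_insert, Finset.mem_image]
  constructor
  · rintro (rfl | ⟨ρ, _, rfl⟩)
    · rfl
    · exact absurd (Finset.mem_insert_self _ _) hωτ
  · rintro rfl; exact Or.inl rfl

lemma mem_facetsOf_insert_apex {ω : V} {σ ρ : Finset V} (hω : ω ∉ σ) (hωρ : ω ∉ ρ) :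
    insert ω ρ ∈ facetsOf (insert ω σ) ↔ ρ ∈ facetsOf σ := by
  rw [facetsOf_insert hω]
  simp only [Finset.mem_insert, Finset.mem_image]
  constructor
  · rintro (h | ⟨ρ', hρ', he⟩)
    · exact absurd (h ▸ Finset.mem_insert_self ω ρ) hω
    · have hωρ' : ω ∉ ρ' := fun hx => hω ((mem_facetsOf.mp hρ').1 hx)
      rwa [(insert_inj_free hωρ' hωρ).mp he] at hρ'
  · intro h; exact Or.inr ⟨ρ, h, rfl⟩

lemma mem_image_insert_free {ω : V} {S : Finset (Finset V)} (hS : ∀ s ∈ S, ω ∉ s)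
    {ρ : Finset V} (hρ : ω ∉ ρ) : insert ω ρ ∈ S.image (insert ω) ↔ ρ ∈ S := by
  simp only [Finset.mem_image]
  constructor
  · rintro ⟨σ, hσ, he⟩
    rwa [← (insert_inj_free (hS σ hσ) hρ).mp he]
  · intro h; exact ⟨ρ, h, rfl⟩

lemma mem_of_mem_image_insert {ω : V} {S : Finset (Finset V)} {τ : Finset V}
    (h : τ ∈ S.image (insert ω)) : ω ∈ τ := by
  obtain ⟨σ, _, rfl⟩ := Finset.mem_image.mp h
  exact Finset.mem_insert_self _ _

lemma free_of_mem_bdry {ω : V} {C : Finset (Finset V)} (hC : ∀ s ∈ C, ω ∉ s)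
    {ρ : Finset V} (h : ρ ∈ bdry C) : ω ∉ ρ := by
  obtain ⟨s, hs, hsub⟩ := exists_of_mem_bdry h
  exact fun hx => hC s hs (hsub hx)

lemma bdry_image_insert {ω : V} {S : Finset (Finset V)} (hS : ∀ s ∈ S, ω ∉ s) :
    bdry (S.image (insert ω)) = S ∪ (bdry S).image (insert ω) := by
  ext τ
  by_cases hωτ : ω ∈ τ
  · -- τ contains ω : compare apex parts
    obtain ⟨ρ, hρτ, rfl⟩ : ∃ ρ, ω ∉ ρ ∧ τ = insert ω ρ :=
      ⟨τ.erase ω, Finset.notMem_erase _ _, (Finset.insert_erase hωτ).symm⟩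
    rw [mem_bdry]
    have hfe : (S.image (insert ω)).filter (fun s => insert ω ρ ∈ facetsOf s)
        = (S.filter (fun s => ρ ∈ facetsOf s)).image (insert ω) := by
      ext t
      simp only [Finset.mem_filter, Finset.mem_image]
      constructor
      · rintro ⟨⟨σ, hσ, rfl⟩, hf⟩
        exact ⟨σ, ⟨hσ, (mem_facetsOf_insert_apex (hS σ hσ) hρτ).mp hf⟩, rfl⟩
      · rintro ⟨σ, ⟨hσ, hf⟩, rfl⟩
        exact ⟨⟨σ, hσ, rfl⟩, (mem_facetsOf_insert_apex (hS σ hσ) hρτ).mpr hf⟩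
    rw [hfe, Finset.card_image_of_injOn (fun a ha b hb he =>
      (insert_inj_free (hS a (Finset.mem_of_mem_filter a ha))
        (hS b (Finset.mem_of_mem_filter b hb))).mp he)]
    rw [Finset.mem_union]
    constructor
    · intro h
      exact Or.inr ((mem_image_insert_free (fun s hs => free_of_mem_bdry hS hs) hρτ).mpr
        (mem_bdry.mpr h))
    · rintro (h | h)
      · exact absurd (hS _ h) (by simp)
      · exact mem_bdry.mp ((mem_image_insert_free (fun s hs => free_of_mem_bdry hS hs) hρτ).mp h)
  · -- τ omega-free: compare base parts
    rw [mem_bdry, Finset.mem_union]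
    have hfe : (S.image (insert ω)).filter (fun s => τ ∈ facetsOf s)
        = (S.filter (fun s => s = τ)).image (insert ω) := by
      ext t
      simp only [Finset.mem_filter, Finset.mem_image]
      constructor
      · rintro ⟨⟨σ, hσ, rfl⟩, hf⟩
        exact ⟨σ, ⟨hσ, ((mem_facetsOf_insert_base (hS σ hσ) hωτ).mp hf).symm⟩, rfl⟩
      · rintro ⟨σ, ⟨hσ, rfl⟩, rfl⟩
        exact ⟨⟨σ, hσ, rfl⟩, (mem_facetsOf_insert_base (hS σ hσ) hωτ).mpr rfl⟩
    rw [hfe, Finset.card_image_of_injOn (fun a ha b hb he =>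
      (insert_inj_free (hS a (Finset.mem_of_mem_filter a ha))
        (hS b (Finset.mem_of_mem_filter b hb))).mp he)]
    have : S.filter (fun s => s = τ) = if τ ∈ S then {τ} else ∅ := Finset.filter_eq' S τ
    rw [this]
    constructor
    · intro h
      by_cases hτS : τ ∈ S
      · exact Or.inl hτS
      · rw [if_neg hτS] at h; simp [Nat.odd_iff] at h
    · rintro (h | h)
      · rw [if_pos h]; simp
      · exact absurd (mem_of_mem_image_insert h) hωτ

def susp (ω₁ ω₂ : V) (S : Finset (Finset V)) : Finset (Finset V) :=
  S.image (insert ω₁) ∪ S.image (insert ω₂)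

lemma images_disjoint {ω₁ ω₂ : V} (hω : ω₁ ≠ ω₂) {B₁ B₂ : Finset (Finset V)}
    (h₁ : ∀ s ∈ B₁, ω₁ ∉ s ∧ ω₂ ∉ s) (h₂ : ∀ s ∈ B₂, ω₁ ∉ s ∧ ω₂ ∉ s) :
    Disjoint (B₁.image (insert ω₁)) (B₂.image (insert ω₂)) := by
  rw [Finset.disjoint_left]
  rintro τ hτ1 hτ2
  obtain ⟨σ, hσ, rfl⟩ := Finset.mem_image.mp hτ2
  have hmem := mem_of_mem_image_insert hτ1
  rcases Finset.mem_insert.mp hmem with h | h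
  · exact hω h
  · exact (h₂ σ hσ).1 h

set_option maxHeartbeats 1000000 in

lemma bdry_susp2 {ω₁ ω₂ : V} (hω : ω₁ ≠ ω₂) {B₁ B₂ : Finset (Finset V)}
    (h₁ : ∀ s ∈ B₁, ω₁ ∉ s ∧ ω₂ ∉ s) (h₂ : ∀ s ∈ B₂, ω₁ ∉ s ∧ ω₂ ∉ s) :
    bdry (B₁.image (insert ω₁) ∪ B₂.image (insert ω₂)) =
      (B₁ ∆ B₂) ∪ (bdry B₁).image (insert ω₁) ∪ (bdry B₂).image (insert ω₂) := by
  rw [bdry_union (images_disjoint hω h₁ h₂), bdry_image_insert (fun s hs => (h₁ s hs).1),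
    bdry_image_insert (fun s hs => (h₂ s hs).2)]
  ext τ
  have e1 : τ ∈ B₁ → ω₁ ∉ τ ∧ ω₂ ∉ τ := h₁ τ
  have e2 : τ ∈ B₂ → ω₁ ∉ τ ∧ ω₂ ∉ τ := h₂ τ
  have e3 : τ ∈ (bdry B₁).image (insert ω₁) → ω₁ ∈ τ ∧ ω₂ ∉ τ := by
    intro h
    obtain ⟨ρ, hρ, rfl⟩ := Finset.mem_image.mp h
    refine ⟨Finset.mem_insert_self _ _, fun hx => ?_⟩
    rcases Finset.mem_insert.mp hx with h' | h'
    · exact hω h'.symm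
    · exact free_of_mem_bdry (fun s hs => (h₁ s hs).2) hρ h'
  have e4 : τ ∈ (bdry B₂).image (insert ω₂) → ω₂ ∈ τ ∧ ω₁ ∉ τ := by
    intro h
    obtain ⟨ρ, hρ, rfl⟩ := Finset.mem_image.mp h
    refine ⟨Finset.mem_insert_self _ _, fun hx => ?_⟩
    rcases Finset.mem_insert.mp hx with h' | h'
    · exact hω h'
    · exact free_of_mem_bdry (fun s hs => (h₂ s hs).1) hρ h'
  simp only [Finset.mem_symmDiff, Finset.mem_union]
  by_cases hτ₁ : ω₁ ∈ τ <;> by_cases hτ₂ : ω₂ ∈ τ <;> tauto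

lemma bdry_susp {ω₁ ω₂ : V} (hω : ω₁ ≠ ω₂) {B : Finset (Finset V)}
    (h₁ : ∀ s ∈ B, ω₁ ∉ s ∧ ω₂ ∉ s) :
    bdry (susp ω₁ ω₂ B) = (bdry B).image (insert ω₁) ∪ (bdry B).image (insert ω₂) := by
  rw [susp, bdry_susp2 hω h₁ h₁, symmDiff_self]
  simp

lemma mem_cplxAt {f : ℕ → Finset V} {σ : Finset V} {m : ℕ} :
    σ ∈ cplxAt f m ↔ ∃ k, 1 ≤ k ∧ k ≤ m ∧ f k = σ := by
  simp [cplxAt, Finset.mem_image, Finset.mem_Icc, and_assoc]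

lemma cplxAt_mono {f : ℕ → Finset V} {m m' : ℕ} (h : m ≤ m') :
    cplxAt f m ⊆ cplxAt f m' := by
  intro σ hσ
  rw [mem_cplxAt] at hσ ⊢
  obtain ⟨k, h1, h2, h3⟩ := hσ
  exact ⟨k, h1, le_trans h2 h, h3⟩

variable {f : ℕ → Finset V} {ω₁ ω₂ : V}

lemma gsusp_3i {i : ℕ} (h : 1 ≤ i) : gsusp f ω₁ ω₂ (3 * i) = f i := by
  unfold gsusp
  rw [if_neg (by omega), if_neg (by omega), if_pos (by omega)]
  have : 3 * i / 3 = i := by omega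
  rw [this]

lemma gsusp_3i1 {i : ℕ} (h : 1 ≤ i) : gsusp f ω₁ ω₂ (3 * i + 1) = insert ω₁ (f i) := by
  unfold gsusp
  rw [if_neg (by omega), if_neg (by omega), if_neg (by omega), if_pos (by omega)]
  have : (3 * i + 1) / 3 = i := by omega
  rw [this]

lemma gsusp_3i2 {i : ℕ} (h : 1 ≤ i) : gsusp f ω₁ ω₂ (3 * i + 2) = insert ω₂ (f i) := by
  unfold gsusp
  rw [if_neg (by omega), if_neg (by omega), if_neg (by omega), if_neg (by omega)]
  have : (3 * i + 2) / 3 = i := by omega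
  rw [this]

lemma mem_cplxAt_gsusp {σ : Finset V} {m : ℕ} :
    σ ∈ cplxAt (gsusp f ω₁ ω₂) m ↔
      (1 ≤ m ∧ σ = {ω₁}) ∨ (2 ≤ m ∧ σ = {ω₂}) ∨
      (∃ i, 1 ≤ i ∧ 3 * i ≤ m ∧ σ = f i) ∨
      (∃ i, 1 ≤ i ∧ 3 * i + 1 ≤ m ∧ σ = insert ω₁ (f i)) ∨
      (∃ i, 1 ≤ i ∧ 3 * i + 2 ≤ m ∧ σ = insert ω₂ (f i)) := by
  rw [mem_cplxAt]
  constructor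
  · rintro ⟨k, h1, h2, rfl⟩
    rcases Nat.lt_or_ge k 3 with hk | hk
    · interval_cases k
      · exact Or.inl ⟨h2, by simp [gsusp]⟩
      · exact Or.inr (Or.inl ⟨h2, by simp [gsusp]⟩)
    · have h3 : k % 3 = 0 ∨ k % 3 = 1 ∨ k % 3 = 2 := by omega
      rcases h3 with h3 | h3 | h3
      · obtain ⟨i, rfl⟩ : ∃ i, k = 3 * i := ⟨k / 3, by omega⟩
        exact Or.inr (Or.inr (Or.inl ⟨i, by omega, by omega, gsusp_3i (by omega)⟩))
      · obtain ⟨i, rfl⟩ : ∃ i, k = 3 * i + 1 := ⟨k / 3, by omega⟩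
        exact Or.inr (Or.inr (Or.inr (Or.inl ⟨i, by omega, by omega, gsusp_3i1 (by omega)⟩)))
      · obtain ⟨i, rfl⟩ : ∃ i, k = 3 * i + 2 := ⟨k / 3, by omega⟩
        exact Or.inr (Or.inr (Or.inr (Or.inr ⟨i, by omega, by omega, gsusp_3i2 (by omega)⟩)))
  · rintro (⟨hm, rfl⟩ | ⟨hm, rfl⟩ | ⟨i, h1, h2, rfl⟩ | ⟨i, h1, h2, rfl⟩ | ⟨i, h1, h2, rfl⟩)
    · exact ⟨1, le_refl _, hm, by simp [gsusp]⟩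
    · exact ⟨2, by omega, hm, by simp [gsusp]⟩
    · exact ⟨3 * i, by omega, h2, gsusp_3i h1⟩
    · exact ⟨3 * i + 1, by omega, h2, gsusp_3i1 h1⟩
    · exact ⟨3 * i + 2, by omega, h2, gsusp_3i2 h1⟩

lemma hat_member_struct {d m : ℕ} (hω₁ : ∀ i, ω₁ ∉ f i) (hω₂ : ∀ i, ω₂ ∉ f i)
    (hω : ω₁ ≠ ω₂) (hd : 2 ≤ d)
    {τ : Finset V} (hτ : τ ∈ cplxAt (gsusp f ω₁ ω₂) m) (hcard : τ.card = d + 1) :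
    (∃ i, 1 ≤ i ∧ 3 * i ≤ m ∧ (f i).card = d + 1 ∧ τ = f i) ∨
    (∃ i, 1 ≤ i ∧ 3 * i + 1 ≤ m ∧ (f i).card = d ∧ τ = insert ω₁ (f i)) ∨
    (∃ i, 1 ≤ i ∧ 3 * i + 2 ≤ m ∧ (f i).card = d ∧ τ = insert ω₂ (f i)) := by
  rcases mem_cplxAt_gsusp.mp hτ with ⟨_, rfl⟩ | ⟨_, rfl⟩ | ⟨i, h1, h2, rfl⟩ |
    ⟨i, h1, h2, rfl⟩ | ⟨i, h1, h2, rfl⟩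
  · simp at hcard; omega
  · simp at hcard; omega
  · exact Or.inl ⟨i, h1, h2, hcard, rfl⟩
  · refine Or.inr (Or.inl ⟨i, h1, h2, ?_, rfl⟩)
    rw [Finset.card_insert_of_notMem (hω₁ i)] at hcard
    omega
  · refine Or.inr (Or.inr ⟨i, h1, h2, ?_, rfl⟩)
    rw [Finset.card_insert_of_notMem (hω₂ i)] at hcard
    omega

lemma hat_bchain_struct {d m n : ℕ} (hω₁ : ∀ i, ω₁ ∉ f i) (hω₂ : ∀ i, ω₂ ∉ f i)
    (htop : ∀ σ ∈ cplxAt f n, σ.card ≤ d + 1) (hmn : m ≤ 3 * n + 2)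
    {τ : Finset V} (hτ : τ ∈ cplxAt (gsusp f ω₁ ω₂) m) (hcard : τ.card = d + 2) :
    (∃ i, 1 ≤ i ∧ 3 * i + 1 ≤ m ∧ (f i).card = d + 1 ∧ τ = insert ω₁ (f i)) ∨
    (∃ i, 1 ≤ i ∧ 3 * i + 2 ≤ m ∧ (f i).card = d + 1 ∧ τ = insert ω₂ (f i)) := by
  rcases mem_cplxAt_gsusp.mp hτ with ⟨_, rfl⟩ | ⟨_, rfl⟩ | ⟨i, h1, h2, rfl⟩ |
    ⟨i, h1, h2, rfl⟩ | ⟨i, h1, h2, rfl⟩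
  · simp at hcard
  · simp at hcard
  · have : f i ∈ cplxAt f n := mem_cplxAt.mpr ⟨i, h1, by omega, rfl⟩
    have := htop _ this
    omega
  · refine Or.inl ⟨i, h1, h2, ?_, rfl⟩
    rw [Finset.card_insert_of_notMem (hω₁ i)] at hcard
    omega
  · refine Or.inr ⟨i, h1, h2, ?_, rfl⟩
    rw [Finset.card_insert_of_notMem (hω₂ i)] at hcard
    omega

lemma sum_wHat_susp {w : Finset V → ℝ} {n d : ℕ} (hω : ω₁ ≠ ω₂) {S : Finset (Finset V)}
    (hfree : ∀ s ∈ S, ω₁ ∉ s ∧ ω₂ ∉ s) :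
    (∑ τ ∈ susp ω₁ ω₂ S, wHat f w ω₁ ω₂ n d τ) = ∑ σ ∈ S, w σ := by
  rw [susp, Finset.sum_union (images_disjoint hω hfree hfree),
    Finset.sum_image (fun a ha b hb he => (insert_inj_free (hfree a ha).1 (hfree b hb).1).mp he),
    Finset.sum_image (fun a ha b hb he => (insert_inj_free (hfree a ha).2 (hfree b hb).2).mp he)]
  rw [← Finset.sum_add_distrib]
  apply Finset.sum_congr rfl
  intro σ hσ
  have h1 : wHat f w ω₁ ω₂ n d (insert ω₁ σ) = w σ / 2 := by
    rw [wHat, if_pos (Finset.mem_insert_self _ _), Finset.erase_insert (hfree σ hσ).1]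
  have h2 : wHat f w ω₁ ω₂ n d (insert ω₂ σ) = w σ / 2 := by
    rw [wHat, if_neg, if_pos (Finset.mem_insert_self _ _), Finset.erase_insert (hfree σ hσ).2]
    intro hx
    rcases Finset.mem_insert.mp hx with h | h
    · exact hω h
    · exact (hfree σ hσ).1 h
  rw [h1, h2]
  ring

lemma mem_susp_free {S : Finset (Finset V)} {ρ : Finset V} (hω : ω₁ ≠ ω₂)
    (hS : ∀ s ∈ S, ω₁ ∉ s ∧ ω₂ ∉ s) (hρ₁ : ω₁ ∉ ρ) (hρ₂ : ω₂ ∉ ρ) :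
    (insert ω₁ ρ ∈ susp ω₁ ω₂ S ↔ ρ ∈ S) ∧ (insert ω₂ ρ ∈ susp ω₁ ω₂ S ↔ ρ ∈ S) ∧
      ρ ∉ susp ω₁ ω₂ S := by
  refine ⟨?_, ?_, ?_⟩
  · rw [susp, Finset.mem_union]
    constructor
    · rintro (h | h)
      · exact (mem_image_insert_free (fun s hs => (hS s hs).1) hρ₁).mp h
      · obtain ⟨σ, hσ, he⟩ := Finset.mem_image.mp h
        exfalso
        have : ω₂ ∈ insert ω₁ ρ := he ▸ Finset.mem_insert_self _ _
        rcases Finset.mem_insert.mp this with h' | h'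
        · exact hω h'.symm
        · exact hρ₂ h'
    · intro h
      exact Or.inl ((mem_image_insert_free (fun s hs => (hS s hs).1) hρ₁).mpr h)
  · rw [susp, Finset.mem_union]
    constructor
    · rintro (h | h)
      · obtain ⟨σ, hσ, he⟩ := Finset.mem_image.mp h
        exfalso
        have : ω₁ ∈ insert ω₂ ρ := he ▸ Finset.mem_insert_self _ _
        rcases Finset.mem_insert.mp this with h' | h'
        · exact hω h'
        · exact hρ₁ h'
      · exact (mem_image_insert_free (fun s hs => (hS s hs).2) hρ₂).mp h
    · intro h
      exact Or.inr ((mem_image_insert_free (fun s hs => (hS s hs).2) hρ₂).mpr h)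
  · intro h
    rcases Finset.mem_union.mp h with h | h
    · exact hρ₁ (mem_of_mem_image_insert h)
    · exact hρ₂ (mem_of_mem_image_insert h)

lemma desusp {d n : ℕ} {ζ' : Finset (Finset V)} (hω : ω₁ ≠ ω₂)
    (hω₁ : ∀ i, ω₁ ∉ f i) (hω₂ : ∀ i, ω₂ ∉ f i)
    (htop : ∀ σ ∈ cplxAt f n, σ.card ≤ d + 1) {m : ℕ} (hmn : m ≤ 3 * n + 2)
    (hζf : ∀ σ ∈ ζ', ω₁ ∉ σ ∧ ω₂ ∉ σ)
    {B : Finset (Finset V)} (hB : ∀ τ ∈ B, τ ∈ cplxAt (gsusp f ω₁ ω₂) m ∧ τ.card = d + 2)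
    (hbd : susp ω₁ ω₂ ζ' = bdry B) :
    ∃ B' : Finset (Finset V),
      (∀ σ ∈ B', ∃ i, 1 ≤ i ∧ 3 * i + 2 ≤ m ∧ (f i).card = d + 1 ∧ σ = f i) ∧
      ζ' = bdry B' ∧ (∀ γ : Finset V, ω₂ ∉ γ → insert ω₂ γ ∈ B → γ ∈ B') := by
  classical
  set B₁ : Finset (Finset V) := (B.filter (fun s => ω₁ ∈ s)).image (fun s => s.erase ω₁) with hB₁def
  set B₂ : Finset (Finset V) := (B.filter (fun s => ω₂ ∈ s)).image (fun s => s.erase ω₂) with hB₂def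
  have hstruct : ∀ s ∈ B,
      (∃ i, 1 ≤ i ∧ 3 * i + 1 ≤ m ∧ (f i).card = d + 1 ∧ s = insert ω₁ (f i)) ∨
      (∃ i, 1 ≤ i ∧ 3 * i + 2 ≤ m ∧ (f i).card = d + 1 ∧ s = insert ω₂ (f i)) :=
    fun s hs => hat_bchain_struct hω₁ hω₂ htop hmn (hB s hs).1 (hB s hs).2
  have hc1 : ∀ σ ∈ B₁, ∃ i, 1 ≤ i ∧ 3 * i + 1 ≤ m ∧ (f i).card = d + 1 ∧ σ = f i := by
    intro σ hσ
    obtain ⟨s, hs, rfl⟩ := Finset.mem_image.mp hσ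
    have hsB := Finset.mem_of_mem_filter s hs
    have hsω : ω₁ ∈ s := (Finset.mem_filter.mp hs).2
    rcases hstruct s hsB with ⟨i, h1, h2, h3, rfl⟩ | ⟨i, h1, h2, h3, rfl⟩
    · exact ⟨i, h1, h2, h3, Finset.erase_insert (hω₁ i)⟩
    · exfalso
      rcases Finset.mem_insert.mp hsω with h | h
      · exact hω h
      · exact hω₁ i h
  have hc2 : ∀ σ ∈ B₂, ∃ i, 1 ≤ i ∧ 3 * i + 2 ≤ m ∧ (f i).card = d + 1 ∧ σ = f i := by
    intro σ hσ
    obtain ⟨s, hs, rfl⟩ := Finset.mem_image.mp hσ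
    have hsB := Finset.mem_of_mem_filter s hs
    have hsω : ω₂ ∈ s := (Finset.mem_filter.mp hs).2
    rcases hstruct s hsB with ⟨i, h1, h2, h3, rfl⟩ | ⟨i, h1, h2, h3, rfl⟩
    · exfalso
      rcases Finset.mem_insert.mp hsω with h | h
      · exact hω h.symm
      · exact hω₂ i h
    · exact ⟨i, h1, h2, h3, Finset.erase_insert (hω₂ i)⟩
  have hfree₁ : ∀ σ ∈ B₁, ω₁ ∉ σ ∧ ω₂ ∉ σ := by
    intro σ hσ
    obtain ⟨i, _, _, _, rfl⟩ := hc1 σ hσ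
    exact ⟨hω₁ i, hω₂ i⟩
  have hfree₂ : ∀ σ ∈ B₂, ω₁ ∉ σ ∧ ω₂ ∉ σ := by
    intro σ hσ
    obtain ⟨i, _, _, _, rfl⟩ := hc2 σ hσ
    exact ⟨hω₁ i, hω₂ i⟩
  have hc3 : B = B₁.image (insert ω₁) ∪ B₂.image (insert ω₂) := by
    ext s
    constructor
    · intro hs
      rcases hstruct s hs with ⟨i, h1, h2, h3, rfl⟩ | ⟨i, h1, h2, h3, rfl⟩
      · refine Finset.mem_union_left _ (Finset.mem_image.mpr ⟨f i, ?_, rfl⟩)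
        refine Finset.mem_image.mpr ⟨insert ω₁ (f i), Finset.mem_filter.mpr ⟨hs, Finset.mem_insert_self _ _⟩, Finset.erase_insert (hω₁ i)⟩
      · refine Finset.mem_union_right _ (Finset.mem_image.mpr ⟨f i, ?_, rfl⟩)
        refine Finset.mem_image.mpr ⟨insert ω₂ (f i), Finset.mem_filter.mpr ⟨hs, Finset.mem_insert_self _ _⟩, Finset.erase_insert (hω₂ i)⟩
    · intro hs
      rcases Finset.mem_union.mp hs with h | h
      · obtain ⟨σ, hσ, rfl⟩ := Finset.mem_image.mp h
        obtain ⟨t, ht, rfl⟩ := Finset.mem_image.mp hσ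
        rw [Finset.insert_erase (Finset.mem_filter.mp ht).2]
        exact Finset.mem_of_mem_filter t ht
      · obtain ⟨σ, hσ, rfl⟩ := Finset.mem_image.mp h
        obtain ⟨t, ht, rfl⟩ := Finset.mem_image.mp hσ
        rw [Finset.insert_erase (Finset.mem_filter.mp ht).2]
        exact Finset.mem_of_mem_filter t ht
  have hc4 : susp ω₁ ω₂ ζ' = (B₁ ∆ B₂) ∪ (bdry B₁).image (insert ω₁) ∪ (bdry B₂).image (insert ω₂) := by
    rw [hbd, hc3, bdry_susp2 hω hfree₁ hfree₂]
  have hc5 : B₁ = B₂ := by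
    ext σ
    have hnd : σ ∉ B₁ ∆ B₂ := by
      intro hσ
      have hfree : ω₁ ∉ σ ∧ ω₂ ∉ σ := by
        rcases Finset.mem_symmDiff.mp hσ with ⟨h, _⟩ | ⟨h, _⟩
        · exact hfree₁ σ h
        · exact hfree₂ σ h
      have : σ ∈ susp ω₁ ω₂ ζ' := by
        rw [hc4]
        exact Finset.mem_union_left _ (Finset.mem_union_left _ hσ)
      exact (mem_susp_free hω hζf hfree.1 hfree.2).2.2 this
    rw [Finset.mem_symmDiff] at hnd
    tauto
  have hc6 : ζ' = bdry B₁ := by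
    ext ρ
    by_cases hρ₁ : ω₁ ∈ ρ
    · constructor
      · intro h; exact absurd hρ₁ (hζf ρ h).1
      · intro h; exact absurd hρ₁ (free_of_mem_bdry (fun s hs => (hfree₁ s hs).1) h)
    · by_cases hρ₂ : ω₂ ∈ ρ
      · constructor
        · intro h; exact absurd hρ₂ (hζf ρ h).2
        · intro h; exact absurd hρ₂ (free_of_mem_bdry (fun s hs => (hfree₁ s hs).2) h)
      · have key := hc4
        have lhs_iff : insert ω₁ ρ ∈ susp ω₁ ω₂ ζ' ↔ ρ ∈ ζ' :=
          (mem_susp_free hω hζf hρ₁ hρ₂).1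
        have rhs_iff : insert ω₁ ρ ∈ (B₁ ∆ B₂) ∪ (bdry B₁).image (insert ω₁) ∪ (bdry B₂).image (insert ω₂) ↔ ρ ∈ bdry B₁ := by
          simp only [Finset.mem_union]
          constructor
          · rintro ((h | h) | h)
            · exfalso
              rcases Finset.mem_symmDiff.mp h with ⟨h', _⟩ | ⟨h', _⟩
              · exact (hfree₁ _ h').1 (Finset.mem_insert_self _ _)
              · exact (hfree₂ _ h').1 (Finset.mem_insert_self _ _)
            · exact (mem_image_insert_free (fun s hs => free_of_mem_bdry (fun t ht => (hfree₁ t ht).1) hs) hρ₁).mp h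
            · exfalso
              obtain ⟨x, hx, he⟩ := Finset.mem_image.mp h
              have : ω₂ ∈ insert ω₁ ρ := he ▸ Finset.mem_insert_self _ _
              rcases Finset.mem_insert.mp this with h' | h'
              · exact hω h'.symm
              · exact hρ₂ h'
          · intro h
            exact Or.inl (Or.inr ((mem_image_insert_free (fun s hs => free_of_mem_bdry (fun t ht => (hfree₁ t ht).1) hs) hρ₁).mpr h))
        rw [← lhs_iff, key, rhs_iff]
  refine ⟨B₁, fun σ hσ => ?_, hc6, fun γ hγ hmem => ?_⟩
  · obtain ⟨i, h1, h2, h3, h4⟩ := hc1 σ hσ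
    have hσ₂ : σ ∈ B₂ := hc5 ▸ hσ
    obtain ⟨j, g1, g2, g3, g4⟩ := hc2 σ hσ₂
    exact ⟨j, g1, g2, g3, g4⟩
  · have : γ ∈ B₂ := by
      refine Finset.mem_image.mpr ⟨insert ω₂ γ, Finset.mem_filter.mpr ⟨hmem, Finset.mem_insert_self _ _⟩, Finset.erase_insert hγ⟩
    rw [hc5]
    exact this

lemma cplx_free (hω₁ : ∀ i, ω₁ ∉ f i) (hω₂ : ∀ i, ω₂ ∉ f i) {m : ℕ} {σ : Finset V}
    (h : σ ∈ cplxAt f m) : ω₁ ∉ σ ∧ ω₂ ∉ σ := by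
  obtain ⟨k, _, _, rfl⟩ := mem_cplxAt.mp h
  exact ⟨hω₁ k, hω₂ k⟩

lemma susp_pers {d n β δ : ℕ} (hd : 2 ≤ d)
    (hω : ω₁ ≠ ω₂) (hω₁ : ∀ i, ω₁ ∉ f i) (hω₂ : ∀ i, ω₂ ∉ f i)
    (htop : ∀ σ ∈ cplxAt f n, σ.card ≤ d + 1)
    (hβ1 : 1 ≤ β) (hβδ : β < δ) (hδn : δ ≤ n)
    {ζ : Finset (Finset V)} (hζ : IsPersCyc f (d - 1) β δ ζ) :
    IsPersCyc (gsusp f ω₁ ω₂) d (3 * β + 2) (3 * δ + 2) (susp ω₁ ω₂ ζ) := by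
  obtain ⟨hmem, hall, hcyc, ⟨A, hA, hfδA, hbdA⟩, hnb⟩ := hζ
  have hζfree : ∀ σ ∈ ζ, ω₁ ∉ σ ∧ ω₂ ∉ σ := fun σ hσ => cplx_free hω₁ hω₂ (hall σ hσ).1
  have hAfree : ∀ σ ∈ A, ω₁ ∉ σ ∧ ω₂ ∉ σ := fun σ hσ => cplx_free hω₁ hω₂ (hA σ hσ).1
  refine ⟨?_, ?_, ?_, ?_, ?_⟩
  · rw [gsusp_3i2 hβ1]
    exact Finset.mem_union_right _ (Finset.mem_image.mpr ⟨f β, hmem, rfl⟩)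
  · intro τ hτ
    rcases Finset.mem_union.mp hτ with h | h <;>
      obtain ⟨σ, hσ, rfl⟩ := Finset.mem_image.mp h <;>
      obtain ⟨i, h1, h2, rfl⟩ := mem_cplxAt.mp (hall σ hσ).1
    · refine ⟨mem_cplxAt_gsusp.mpr (Or.inr (Or.inr (Or.inr (Or.inl ⟨i, h1, by omega, rfl⟩)))), ?_⟩
      rw [Finset.card_insert_of_notMem (hω₁ i)]
      have := (hall _ hσ).2
      omega
    · refine ⟨mem_cplxAt_gsusp.mpr (Or.inr (Or.inr (Or.inr (Or.inr ⟨i, h1, by omega, rfl⟩)))), ?_⟩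
      rw [Finset.card_insert_of_notMem (hω₂ i)]
      have := (hall _ hσ).2
      omega
  · rw [bdry_susp hω hζfree, hcyc]
    simp
  · refine ⟨susp ω₁ ω₂ A, ?_, ?_, ?_⟩
    · intro τ hτ
      rcases Finset.mem_union.mp hτ with h | h <;>
        obtain ⟨σ, hσ, rfl⟩ := Finset.mem_image.mp h <;>
        obtain ⟨i, h1, h2, rfl⟩ := mem_cplxAt.mp (hA σ hσ).1
      · refine ⟨mem_cplxAt_gsusp.mpr (Or.inr (Or.inr (Or.inr (Or.inl ⟨i, h1, by omega, rfl⟩)))), ?_⟩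
        rw [Finset.card_insert_of_notMem (hω₁ i)]
        have := (hA _ hσ).2
        omega
      · refine ⟨mem_cplxAt_gsusp.mpr (Or.inr (Or.inr (Or.inr (Or.inr ⟨i, h1, by omega, rfl⟩)))), ?_⟩
        rw [Finset.card_insert_of_notMem (hω₂ i)]
        have := (hA _ hσ).2
        omega
    · rw [gsusp_3i2 (by omega : 1 ≤ δ)]
      exact Finset.mem_union_right _ (Finset.mem_image.mpr ⟨f δ, hfδA, rfl⟩)
    · rw [bdry_susp hω hAfree, ← hbdA, susp]
  · rintro ⟨B, hB, hbdB⟩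
    have hm' : (3 * δ + 2 - 1 : ℕ) = 3 * δ + 1 := by omega
    rw [hm'] at hB
    obtain ⟨B', hB'mem, hB'bd, -⟩ := desusp hω hω₁ hω₂ htop (by omega : 3 * δ + 1 ≤ 3 * n + 2)
      hζfree hB hbdB
    refine hnb ⟨B', fun σ hσ => ?_, hB'bd⟩
    obtain ⟨i, h1, h2, h3, rfl⟩ := hB'mem σ hσ
    exact ⟨mem_cplxAt.mpr ⟨i, h1, by omega, rfl⟩, by omega⟩

set_option maxHeartbeats 1000000 in
/-- The reduction PCYC-FIN_{d−1} ⟶ PCYC-FIN_d (d ≥ 2) behind NP-hardness: for an instance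
(K, F, [β,δ)) with K of top dimension d, in the suspension instance (SK, SF, [3β+2,3δ+2))
(with the weights above) every minimal persistent d-cycle of [3β+2, 3δ+2) consists only of
suspended simplices, and its image under S⁻¹ is a minimal persistent (d−1)-cycle of [β,δ)
of the same weight. -/
theorem stmt19 {d n β δ : ℕ} (hd : 2 ≤ d) (f : ℕ → Finset V) (hinj : Function.Injective f)
    (ω₁ ω₂ : V) (hω : ω₁ ≠ ω₂) (hω₁ : ∀ i, ω₁ ∉ f i) (hω₂ : ∀ i, ω₂ ∉ f i)
    (w : Finset V → ℝ) (hw : ∀ σ, 0 ≤ w σ)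
    (hcplx : ∀ σ ∈ cplxAt f n, ∀ τ ⊆ σ, τ.Nonempty → τ ∈ cplxAt f n)
    (htop : ∀ σ ∈ cplxAt f n, σ.card ≤ d + 1)
    (hβ1 : 1 ≤ β) (hβδ : β < δ) (hδn : δ ≤ n)
    (hfβ : (f β).card = d) (hfδ : (f δ).card = d + 1)
    (hexists : ∃ ζ : Finset (Finset V), IsPersCyc f (d - 1) β δ ζ) :
    ∀ ζhat : Finset (Finset V),
      IsPersCyc (gsusp f ω₁ ω₂) d (3 * β + 2) (3 * δ + 2) ζhat →
      (∀ ξ : Finset (Finset V), IsPersCyc (gsusp f ω₁ ω₂) d (3 * β + 2) (3 * δ + 2) ξ →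
        (∑ τ ∈ ζhat, wHat f w ω₁ ω₂ n d τ) ≤ (∑ τ ∈ ξ, wHat f w ω₁ ω₂ n d τ)) →
      (∀ τ ∈ ζhat, ω₁ ∈ τ ∨ ω₂ ∈ τ) ∧
      IsPersCyc f (d - 1) β δ
        ((ζhat.filter (fun τ => ω₁ ∈ τ)).image (fun τ => τ.erase ω₁)) ∧
      (∀ ξ : Finset (Finset V), IsPersCyc f (d - 1) β δ ξ →
        (∑ σ ∈ (ζhat.filter (fun τ => ω₁ ∈ τ)).image (fun τ => τ.erase ω₁), w σ) ≤
          (∑ σ ∈ ξ, w σ)) ∧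
      (∑ σ ∈ (ζhat.filter (fun τ => ω₁ ∈ τ)).image (fun τ => τ.erase ω₁), w σ) =
        (∑ τ ∈ ζhat, wHat f w ω₁ ω₂ n d τ) := by
  intro ζhat hpers hmin
  obtain ⟨ζ₀, hζ₀⟩ := hexists
  have hsusp₀ := susp_pers hd hω hω₁ hω₂ htop hβ1 hβδ hδn hζ₀
  have hζ₀free : ∀ σ ∈ ζ₀, ω₁ ∉ σ ∧ ω₂ ∉ σ :=
    fun σ hσ => cplx_free hω₁ hω₂ (hζ₀.2.1 σ hσ).1
  set T := ∑ σ ∈ (cplxAt f n).filter (fun σ => σ.card = d), w σ with hT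
  obtain ⟨hmemβ, hall, hcyc, hbound, hnb⟩ := hpers
  have hstruct : ∀ s ∈ ζhat,
      (∃ i, 1 ≤ i ∧ 3 * i ≤ 3 * β + 2 ∧ (f i).card = d + 1 ∧ s = f i) ∨
      (∃ i, 1 ≤ i ∧ 3 * i + 1 ≤ 3 * β + 2 ∧ (f i).card = d ∧ s = insert ω₁ (f i)) ∨
      (∃ i, 1 ≤ i ∧ 3 * i + 2 ≤ 3 * β + 2 ∧ (f i).card = d ∧ s = insert ω₂ (f i)) :=
    fun s hs => hat_member_struct hω₁ hω₂ hω hd (hall s hs).1 (hall s hs).2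
  have hWnn : ∀ τ, 0 ≤ wHat f w ω₁ ω₂ n d τ := by
    intro τ
    rw [wHat]
    split_ifs
    · exact div_nonneg (hw _) (by norm_num)
    · exact div_nonneg (hw _) (by norm_num)
    · have : 0 ≤ T := Finset.sum_nonneg (fun σ _ => hw σ)
      rw [← hT]
      linarith
  have hTb : (∑ τ ∈ ζhat, wHat f w ω₁ ω₂ n d τ) ≤ T := by
    have h2 := hmin _ hsusp₀
    have h3 : (∑ τ ∈ susp ω₁ ω₂ ζ₀, wHat f w ω₁ ω₂ n d τ) = ∑ σ ∈ ζ₀, w σ :=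
      sum_wHat_susp hω hζ₀free
    have h4 : (∑ σ ∈ ζ₀, w σ) ≤ T := by
      apply Finset.sum_le_sum_of_subset_of_nonneg
      · intro σ hσ
        refine Finset.mem_filter.mpr ⟨cplxAt_mono (by omega) (hζ₀.2.1 σ hσ).1, ?_⟩
        have := (hζ₀.2.1 σ hσ).2
        omega
      · intro σ _ _
        exact hw σ
    linarith
  have hB : ∀ s ∈ ζhat, ω₁ ∈ s ∨ ω₂ ∈ s := by
    intro s hs
    by_contra hcon
    push_neg at hcon
    have hWs : wHat f w ω₁ ω₂ n d s = T + 1 := by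
      rw [wHat, if_neg hcon.1, if_neg hcon.2]
    have h1 : T + 1 ≤ ∑ τ ∈ ζhat, wHat f w ω₁ ω₂ n d τ :=
      hWs ▸ Finset.single_le_sum (fun τ _ => hWnn τ) hs
    linarith
  have hstruct2 : ∀ s ∈ ζhat, ∃ i, 1 ≤ i ∧ i ≤ β ∧ (f i).card = d ∧
      (s = insert ω₁ (f i) ∨ s = insert ω₂ (f i)) := by
    intro s hs
    rcases hstruct s hs with ⟨i, h1, h2, h3, rfl⟩ | ⟨i, h1, h2, h3, rfl⟩ | ⟨i, h1, h2, h3, rfl⟩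
    · exfalso
      rcases hB _ hs with h | h
      · exact hω₁ i h
      · exact hω₂ i h
    · exact ⟨i, h1, by omega, h3, Or.inl rfl⟩
    · exact ⟨i, h1, by omega, h3, Or.inr rfl⟩
  have hsym : ∀ ρ : Finset V, ω₁ ∉ ρ → ω₂ ∉ ρ →
      (insert ω₁ ρ ∈ ζhat ↔ insert ω₂ ρ ∈ ζhat) := by
    intro ρ hρ₁ hρ₂
    have hρnb : ρ ∉ bdry ζhat := by rw [hcyc]; exact Finset.notMem_empty ρ
    rw [mem_bdry] at hρnb
    have hfe : ζhat.filter (fun s => ρ ∈ facetsOf s)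
        = ζhat.filter (fun s => s = insert ω₁ ρ ∨ s = insert ω₂ ρ) := by
      apply Finset.filter_congr
      intro s hs
      obtain ⟨i, hi1, hi2, hi3, hcase⟩ := hstruct2 s hs
      constructor
      · intro hf
        rcases hcase with rfl | rfl
        · left
          rw [(mem_facetsOf_insert_base (hω₁ i) hρ₁).mp hf]
        · right
          rw [(mem_facetsOf_insert_base (hω₂ i) hρ₂).mp hf]
      · rintro (rfl | rfl)
        · exact (mem_facetsOf_insert_base hρ₁ hρ₁).mpr rfl
        · exact (mem_facetsOf_insert_base hρ₂ hρ₂).mpr rfl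
    have hne : insert ω₁ ρ ≠ insert ω₂ ρ := by
      intro he
      have : ω₁ ∈ insert ω₂ ρ := he ▸ Finset.mem_insert_self _ _
      rcases Finset.mem_insert.mp this with h | h
      · exact hω h
      · exact hρ₁ h
    rw [hfe, Finset.filter_or, Finset.filter_eq', Finset.filter_eq'] at hρnb
    by_cases h1 : insert ω₁ ρ ∈ ζhat <;> by_cases h2 : insert ω₂ ρ ∈ ζhat
    · exact iff_of_true h1 h2
    · exfalso
      apply hρnb
      rw [if_pos h1, if_neg h2, Finset.union_empty, Finset.card_singleton]
      exact odd_one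
    · exfalso
      apply hρnb
      rw [if_pos h2, if_neg h1, Finset.empty_union, Finset.card_singleton]
      exact odd_one
    · exact iff_of_false h1 h2
  set ζ' := (ζhat.filter (fun τ => ω₁ ∈ τ)).image (fun τ => τ.erase ω₁) with hζ'def
  have hζ'struct : ∀ σ ∈ ζ', ∃ i, 1 ≤ i ∧ i ≤ β ∧ (f i).card = d ∧ σ = f i := by
    intro σ hσ
    obtain ⟨t, ht, rfl⟩ := Finset.mem_image.mp hσ
    have htζ := Finset.mem_of_mem_filter t ht
    have htω : ω₁ ∈ t := (Finset.mem_filter.mp ht).2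
    obtain ⟨i, h1, h2, h3, hcase⟩ := hstruct2 t htζ
    rcases hcase with rfl | rfl
    · exact ⟨i, h1, h2, h3, Finset.erase_insert (hω₁ i)⟩
    · exfalso
      rcases Finset.mem_insert.mp htω with h | h
      · exact hω h
      · exact hω₁ i h
  have hζ'free : ∀ σ ∈ ζ', ω₁ ∉ σ ∧ ω₂ ∉ σ := by
    intro σ hσ
    obtain ⟨i, _, _, _, rfl⟩ := hζ'struct σ hσ
    exact ⟨hω₁ i, hω₂ i⟩
  have hζ'eq : ζhat = susp ω₁ ω₂ ζ' := by
    ext s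
    constructor
    · intro hs
      obtain ⟨i, h1, h2, h3, hcase⟩ := hstruct2 s hs
      have hfiζ' : insert ω₁ (f i) ∈ ζhat → f i ∈ ζ' := by
        intro h
        exact Finset.mem_image.mpr ⟨insert ω₁ (f i),
          Finset.mem_filter.mpr ⟨h, Finset.mem_insert_self _ _⟩, Finset.erase_insert (hω₁ i)⟩
      rcases hcase with rfl | rfl
      · exact Finset.mem_union_left _ (Finset.mem_image.mpr ⟨f i, hfiζ' hs, rfl⟩)
      · have : insert ω₁ (f i) ∈ ζhat := (hsym (f i) (hω₁ i) (hω₂ i)).mpr hs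
        exact Finset.mem_union_right _ (Finset.mem_image.mpr ⟨f i, hfiζ' this, rfl⟩)
    · intro hs
      rcases Finset.mem_union.mp hs with h | h
      · obtain ⟨σ, hσ, rfl⟩ := Finset.mem_image.mp h
        obtain ⟨t, ht, rfl⟩ := Finset.mem_image.mp hσ
        rw [Finset.insert_erase (Finset.mem_filter.mp ht).2]
        exact Finset.mem_of_mem_filter t ht
      · obtain ⟨σ, hσ, rfl⟩ := Finset.mem_image.mp h
        obtain ⟨i, h1, h2, h3, rfl⟩ := hζ'struct σ hσ
        apply (hsym (f i) (hω₁ i) (hω₂ i)).mp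
        obtain ⟨t, ht, hte⟩ := Finset.mem_image.mp hσ
        rw [← hte, Finset.insert_erase (Finset.mem_filter.mp ht).2]
        exact Finset.mem_of_mem_filter t ht
  have hwsum : (∑ σ ∈ ζ', w σ) = ∑ τ ∈ ζhat, wHat f w ω₁ ω₂ n d τ := by
    rw [hζ'eq, sum_wHat_susp hω hζ'free]
  refine ⟨hB, ⟨?_, ?_, ?_, ?_, ?_⟩, ?_, hwsum⟩
  · -- f β ∈ ζ'
    have h1 : insert ω₂ (f β) ∈ ζhat := by
      rw [← gsusp_3i2 hβ1]
      exact hmemβ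
    have h2 : insert ω₁ (f β) ∈ ζhat := (hsym (f β) (hω₁ β) (hω₂ β)).mpr h1
    exact Finset.mem_image.mpr ⟨insert ω₁ (f β),
      Finset.mem_filter.mpr ⟨h2, Finset.mem_insert_self _ _⟩, Finset.erase_insert (hω₁ β)⟩
  · -- members
    intro σ hσ
    obtain ⟨i, h1, h2, h3, rfl⟩ := hζ'struct σ hσ
    exact ⟨mem_cplxAt.mpr ⟨i, h1, h2, rfl⟩, by omega⟩
  · -- cycle
    have h1 : bdry (susp ω₁ ω₂ ζ') = ∅ := hζ'eq ▸ hcyc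
    rw [bdry_susp hω hζ'free] at h1
    have h2 : (bdry ζ').image (insert ω₁) = ∅ :=
      Finset.subset_empty.mp (h1 ▸ Finset.subset_union_left)
    exact Finset.image_eq_empty.mp h2
  · -- bounding chain
    obtain ⟨Ahat, hAhat, hmemA, hbdA⟩ := hbound
    obtain ⟨B', hB'mem, hB'bd, hB'last⟩ := desusp hω hω₁ hω₂ htop
      (by omega : 3 * δ + 2 ≤ 3 * n + 2) hζ'free hAhat (hζ'eq ▸ hbdA)
    refine ⟨B', fun σ hσ => ?_, ?_, hB'bd⟩
    · obtain ⟨i, h1, h2, h3, rfl⟩ := hB'mem σ hσ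
      exact ⟨mem_cplxAt.mpr ⟨i, h1, by omega, rfl⟩, by omega⟩
    · apply hB'last (f δ) (hω₂ δ)
      rw [← gsusp_3i2 (by omega : 1 ≤ δ)]
      exact hmemA
  · -- nonbounding
    rintro ⟨B, hBmem, hbdB⟩
    apply hnb
    refine ⟨susp ω₁ ω₂ B, ?_, ?_⟩
    · intro τ hτ
      have hBfree : ∀ σ ∈ B, ω₁ ∉ σ ∧ ω₂ ∉ σ :=
        fun σ hσ => cplx_free hω₁ hω₂ (hBmem σ hσ).1
      rcases Finset.mem_union.mp hτ with h | h <;>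
        obtain ⟨σ, hσ, rfl⟩ := Finset.mem_image.mp h <;>
        obtain ⟨i, h1, h2, rfl⟩ := mem_cplxAt.mp (hBmem σ hσ).1
      · refine ⟨mem_cplxAt_gsusp.mpr (Or.inr (Or.inr (Or.inr (Or.inl ⟨i, h1, by omega, rfl⟩)))), ?_⟩
        rw [Finset.card_insert_of_notMem (hω₁ i)]
        have := (hBmem _ hσ).2
        omega
      · refine ⟨mem_cplxAt_gsusp.mpr (Or.inr (Or.inr (Or.inr (Or.inr ⟨i, h1, by omega, rfl⟩)))), ?_⟩
        rw [Finset.card_insert_of_notMem (hω₂ i)]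
        have := (hBmem _ hσ).2
        omega
    · have hBfree : ∀ σ ∈ B, ω₁ ∉ σ ∧ ω₂ ∉ σ :=
        fun σ hσ => cplx_free hω₁ hω₂ (hBmem σ hσ).1
      rw [bdry_susp hω hBfree, ← hbdB, hζ'eq, susp]
  · -- minimality
    intro ξ hξ
    have hξfree : ∀ σ ∈ ξ, ω₁ ∉ σ ∧ ω₂ ∉ σ :=
      fun σ hσ => cplx_free hω₁ hω₂ (hξ.2.1 σ hσ).1
    have h1 := hmin _ (susp_pers hd hω hω₁ hω₂ htop hβ1 hβδ hδn hξ)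
    rw [sum_wHat_susp hω hξfree] at h1
    rw [hwsum]
    exact h1
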